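/- Let p,q ≥ 1 with p even and q odd, and let ρ ∈ ℤ^{p+q} be defined by ρ_i = p+1-2i for 1 ≤ i ≤ p and ρ_{p+j} = q+1-2j for 1 ≤ j ≤ q. Then ∏_{1 ≤ i < j ≤ p+q} (ρ_i - ρ_j) ≠ 0. -/
import Mathlib


/-- For p even, q odd, the product ∏_{i<j} (ρ_i - ρ_j) over the coordinates of
the half sum of positive roots of U(p)×U(q) is nonzero. -/
theorem stmt_8 (p q : ℕ) (hp : 1 ≤ p) (hq : 1 ≤ q) (hpe : Even p) (hqo : Odd q)
    (ρ : Fin (p + q) → ℤ)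
    (h1 : ∀ i : Fin (p + q), (i : ℕ) < p → ρ i = (p : ℤ) + 1 - 2 * ((i : ℕ) + 1))
    (h2 : ∀ i : Fin (p + q), p ≤ (i : ℕ) → ρ i = (q : ℤ) + 1 - 2 * (((i : ℕ) - p) + 1)) :
    (∏ i : Fin (p + q), ∏ j : Fin (p + q), if i < j then ρ i - ρ j else 1) ≠ 0 := by
  rw [Finset.prod_ne_zero_iff]
  intro i _
  rw [Finset.prod_ne_zero_iff]
  intro j _
  split_ifs with hij
  · have hij' : (i : ℕ) < (j : ℕ) := hij
    obtain ⟨a, ha⟩ := hpe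
    obtain ⟨b, hb⟩ := hqo
    rcases lt_or_ge (i : ℕ) p with hi | hi <;> rcases lt_or_ge (j : ℕ) p with hj | hj
    · have e1 := h1 i hi; have e2 := h1 j hj; omega
    · have e1 := h1 i hi; have e2 := h2 j hj; omega
    · omega
    · have e1 := h2 i hi; have e2 := h2 j hj; omega
  · exact one_ne_zero
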